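/- arXiv:1503.02094 — 6 statements merged into one kernel-verified Lean document; each statement's English description precedes it below -/
import Mathlib

section
/- Let N ∈ ℕ, let α ≥ 1, β ≥ 0, M ≥ 0 be real numbers, and let e : {0,…,N} × ℕ → ℝ≥0 be a doubly indexed family of nonnegative reals satisfying: (i) e(0,k) = 0 for all k ≥ 1; (ii) e(n,0) ≤ M·αⁿ for all n; and (iii) e(n,k) ≤ α·e(n−1,k) + β·e(n−1,k−1) for all 1 ≤ n ≤ N and k ≥ 1. Then for all 0 ≤ n ≤ N and all k ≥ 0, e(n,k) ≤ M · (n choose k) · α^(n−k) · βᵏ. -/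
/-- The discrete binomial-type recursion lemma underlying the convergence proofs of
parareal iterations: if a nonnegative doubly indexed family `e` satisfies
`e 0 k = 0` for `k ≥ 1`, `e n 0 ≤ M * α ^ n`, and the two-term recursion
`e n k ≤ α * e (n-1) k + β * e (n-1) (k-1)`, then
`e n k ≤ M * (n choose k) * α ^ (n - k) * β ^ k`. -/
theorem parareal_binomial_recursion
    (N : ℕ) (α β M : ℝ) (hα : 1 ≤ α) (hβ : 0 ≤ β) (hM : 0 ≤ M)
    (e : ℕ → ℕ → ℝ)
    (he_nonneg : ∀ n k : ℕ, n ≤ N → 0 ≤ e n k)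
    (he_zero : ∀ k : ℕ, 1 ≤ k → e 0 k = 0)
    (he_init : ∀ n : ℕ, n ≤ N → e n 0 ≤ M * α ^ n)
    (he_rec : ∀ n k : ℕ, 1 ≤ n → n ≤ N → 1 ≤ k →
      e n k ≤ α * e (n - 1) k + β * e (n - 1) (k - 1)) :
    ∀ n : ℕ, n ≤ N → ∀ k : ℕ,
      e n k ≤ M * (n.choose k : ℝ) * α ^ (n - k) * β ^ k := by
  have hα0 : (0:ℝ) ≤ α := le_trans zero_le_one hα
  intro n
  induction n with
  | zero =>
    intro _ k
    cases k with
    | zero => simpa using he_init 0 (Nat.zero_le N)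
    | succ k =>
      rw [he_zero (k+1) (by omega)]
      positivity
  | succ n ih =>
    intro hn k
    have hn' : n ≤ N := by omega
    cases k with
    | zero => simpa using he_init (n+1) hn
    | succ k =>
      have hrec := he_rec (n+1) (k+1) (by omega) hn (by omega)
      simp only [Nat.add_sub_cancel] at hrec
      have h1 := ih hn' (k+1)
      have h2 := ih hn' k
      have key : α * (M * (n.choose (k+1) : ℝ) * α ^ (n-(k+1)) * β ^ (k+1))
          + β * (M * (n.choose k : ℝ) * α ^ (n-k) * β ^ k)
          ≤ M * ((n+1).choose (k+1) : ℝ) * α ^ (n+1-(k+1)) * β ^ (k+1) := by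
        rw [Nat.succ_sub_succ, Nat.choose_succ_succ]
        push_cast
        rcases le_or_gt (k+1) n with h | h
        · have hnk : n - k = (n - (k+1)) + 1 := by omega
          rw [hnk, pow_succ]
          apply le_of_eq
          ring
        · have hc : n.choose (k+1) = 0 := Nat.choose_eq_zero_of_lt h
          rw [hc]
          push_cast
          ring_nf
          nlinarith [pow_nonneg hα0 (n-k), pow_nonneg hβ k,
            mul_nonneg (mul_nonneg (mul_nonneg hM (Nat.cast_nonneg (n.choose k))) (pow_nonneg hα0 (n-k))) (pow_nonneg hβ (k+1))]
      calc e (n+1) (k+1) ≤ α * e n (k+1) + β * e n k := hrec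
        _ ≤ α * (M * (n.choose (k+1) : ℝ) * α ^ (n-(k+1)) * β ^ (k+1))
            + β * (M * (n.choose k : ℝ) * α ^ (n-k) * β ^ k) := by
            gcongr
        _ ≤ _ := key
end

section
/- Under the hypotheses of the parareal convergence theorem — namely Φ, 𝓒, 𝓕 : ℝᵈ → ℝᵈ with |𝓒x − 𝓒y| ≤ (1+CH)|x−y|, |Φx − Φy| ≤ (1+CH)|x−y|, |(Φx−𝓒x) − (Φy−𝓒y)| ≤ CHE_c|x−y|, |(Φx−𝓕x) − (Φy−𝓕y)| ≤ CHE_f|x−y|, |Φx − 𝓒x| ≤ CHE_c(1+|x|), |Φx − 𝓕x| ≤ CHE_f(1+|x|), 0 ≤ E_f ≤ E_c, T = NH, and B := max over 0 ≤ n ≤ N of (1+|𝓕ⁿu₀|) + max over 0 ≤ n ≤ N of (1+|Φⁿu₀|) — the parareal iterates defined by u⁰ₙ = 𝓒ⁿu₀, uᵏ₀ = u₀, uᵏₙ = 𝓒(uᵏₙ₋₁) + 𝓕(uᵏ⁻¹ₙ₋₁) − 𝓒(uᵏ⁻¹ₙ₋₁) satisfy: there exists a constant Λ′ depending only on C, T,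 B such that for every k ≥ 1, max over 0 ≤ n ≤ N of |uᵏₙ − Φⁿu₀| ≤ Λ′ · (E_cᵏ + E_f). In other words, the parareal solution approximates the exact trajectory u(nH) = Φⁿu₀ up to the fine-solver accuracy E_f plus a term decaying geometrically like E_cᵏ in the iteration number k. -/
/-!
With `γ = 1 + CH` and `ℓ = N γᴺ CH`, a one-step recursion `e (n+1) ≤ γ e n + c`, `e 0 = 0`, gives
`e n ≤ N γᴺ c` for `n ≤ N` (discrete Grönwall). Along the exact trajectory this bounds the coarse
error by `ℓ B E_c` and the fine error by `ℓ B E_f`. In a parareal sweep, splitting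
`𝓒 v + 𝓕 w - 𝓒 w - Φ y` into the coarse increment, the two jump differences and the fine defect
at `y` yields the step `γ‖v - y‖ + CH (E_c + E_f)‖w - y‖ + CH E_f B`, so the maximal errors obey
`ε_{k+1} ≤ ℓ ((E_c + E_f) ε_k + B E_f)` and by induction `ε_k ≤ K Mᵏ (E_cᵏ + E_f)`. Since `Mᵏ`
grows, this is only used for `k < n ≤ N`; for `n ≤ k` the iterate is exactly the fine solution.
-/

open Finset

theorem le_mul_pow_mul_of_le_mul_add {γ c : ℝ} (hγ : 1 ≤ γ) (hc : 0 ≤ c) {N : ℕ} {e : ℕ → ℝ}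
    (h0 : e 0 = 0) (hstep : ∀ n < N, e (n + 1) ≤ γ * e n + c) :
    ∀ n ≤ N, e n ≤ N * γ ^ N * c := by
  have hpow : ∀ n ≤ N, e n ≤ n * γ ^ n * c := by
    intro n hn
    induction n with
    | zero => simp [h0]
    | succ n ih =>
      calc e (n + 1) ≤ γ * (n * γ ^ n * c) + c :=
            (hstep n hn).trans (by gcongr; exact ih (by omega))
        _ ≤ γ * (n * γ ^ n * c) + γ ^ (n + 1) * c := by
            gcongr; exact le_mul_of_one_le_left hc (one_le_pow₀ hγ)
        _ = (n + 1 : ℕ) * γ ^ (n + 1) * c := by push_cast; ring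
  exact fun n hn => (hpow n hn).trans (by gcongr)

theorem le_sup'_range_add_sup'_range {N n : ℕ} {f g : ℕ → ℝ} {B : ℝ}
    (hB : B = (range (N + 1)).sup' nonempty_range_add_one f
      + (range (N + 1)).sup' nonempty_range_add_one g)
    (hf : ∀ n, 0 ≤ f n) (hg : ∀ n, 0 ≤ g n) (hn : n ≤ N) : f n ≤ B ∧ g n ≤ B := by
  subst hB
  have hmem : n ∈ range (N + 1) := mem_range.2 (Nat.lt_succ_of_le hn)
  have h₀ : 0 ∈ range (N + 1) := mem_range.2 N.succ_pos
  exact ⟨le_add_of_le_of_nonneg (le_sup' f hmem) (le_sup'_of_le g h₀ (hg 0)),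
    le_add_of_nonneg_of_le (le_sup'_of_le f h₀ (hf 0)) (le_sup' g hmem)⟩

theorem parareal_error_bound_succ {ℓ B Ec Ef K M : ℝ} (hℓ : 0 ≤ ℓ) (hB : 0 ≤ B) (hEf : 0 ≤ Ef)
    (hEfc : Ef ≤ Ec) (hK : 1 ≤ K) (hM : 1 ≤ M) (hM₁ : 2 * ℓ ≤ M) (hM₂ : ℓ * (2 * Ec + B) ≤ M)
    (k : ℕ) :
    ℓ * ((Ec + Ef) * (K * M ^ k * (Ec ^ k + Ef)) + B * Ef)
      ≤ K * M ^ (k + 1) * (Ec ^ (k + 1) + Ef) := by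
  have hEc : 0 ≤ Ec := hEf.trans hEfc
  have hP : 1 ≤ K * M ^ k := one_le_mul_of_one_le_of_one_le hK (one_le_pow₀ hM)
  have hEck : 0 ≤ Ec ^ k := pow_nonneg hEc k
  -- uses `E_c + E_f ≤ 2 E_c` and `1 ≤ K Mᵏ`
  calc ℓ * ((Ec + Ef) * (K * M ^ k * (Ec ^ k + Ef)) + B * Ef)
      ≤ K * M ^ k * (2 * ℓ * Ec ^ (k + 1) + ℓ * (2 * Ec + B) * Ef) := by
        rw [pow_succ]
        nlinarith [mul_nonneg (mul_nonneg (mul_nonneg hℓ (sub_nonneg.2 hEfc)) hEck)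
            (zero_le_one.trans hP),
          mul_nonneg (mul_nonneg (mul_nonneg hℓ (sub_nonneg.2 hEfc)) hEf) (zero_le_one.trans hP),
          mul_nonneg (mul_nonneg (mul_nonneg hℓ hB) hEf) (sub_nonneg.2 hP)]
    _ ≤ K * M ^ k * (M * Ec ^ (k + 1) + M * Ef) := by gcongr
    _ = K * M ^ (k + 1) * (Ec ^ (k + 1) + Ef) := by ring

theorem parareal_error_bound {N : ℕ} {ℓ B Ec Ef : ℝ} (hℓ : 0 ≤ ℓ) (hB : 0 ≤ B) (hEf : 0 ≤ Ef)
    (hEfc : Ef ≤ Ec) {e : ℕ → ℕ → ℝ} (h₀ : ∀ n ≤ N, e 0 n ≤ ℓ * B * Ec)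
    (hsucc : ∀ k ε, (∀ n ≤ N, e k n ≤ ε) → ∀ n ≤ N, e (k + 1) n ≤ ℓ * ((Ec + Ef) * ε + B * Ef))
    (k : ℕ) :
    ∀ n ≤ N, e k n ≤ (1 + ℓ * B * Ec) * (1 + ℓ * (2 + 2 * Ec + B)) ^ k * (Ec ^ k + Ef) := by
  have hEc : 0 ≤ Ec := hEf.trans hEfc
  have hK : 1 ≤ 1 + ℓ * B * Ec := le_add_of_nonneg_right (by positivity)
  have hM : 1 ≤ 1 + ℓ * (2 + 2 * Ec + B) := le_add_of_nonneg_right (by positivity)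
  induction k with
  | zero => exact fun n hn => (h₀ n hn).trans (by nlinarith)
  | succ k ih =>
    exact fun n hn => (hsucc k _ ih n hn).trans
      (parareal_error_bound_succ hℓ hB hEf hEfc hK hM (by nlinarith) (by nlinarith) k)

theorem parareal_eq_iterate_of_le {G : Type*} [AddCommGroup G] {𝓒 𝓕 : G → G} {x : G}
    {u : ℕ → ℕ → G} (hzero : ∀ k, u k 0 = x)
    (hrec : ∀ k n, u (k + 1) (n + 1) = 𝓒 (u (k + 1) n) + 𝓕 (u k n) - 𝓒 (u k n)) :
    ∀ n k, n ≤ k → u k n = 𝓕^[n] x := by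
  intro n
  induction n with
  | zero => intro k _; rw [hzero, Function.iterate_zero_apply]
  | succ n ih =>
    rintro (_ | k) hk
    · omega
    rw [hrec, ih (k + 1) (by omega), ih k (by omega), Function.iterate_succ_apply']
    abel

section Parareal

variable {E : Type*} [NormedAddCommGroup E]

theorem norm_iterate_sub_iterate_le {P Q : E → E} {γ δ : ℝ} (hγ : 1 ≤ γ) (hδ : 0 ≤ δ)
    (hP : ∀ x y, ‖P x - P y‖ ≤ γ * ‖x - y‖) {x : E} {N : ℕ}
    (hdefect : ∀ n < N, ‖P (Q^[n] x) - Q (Q^[n] x)‖ ≤ δ) :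
    ∀ n ≤ N, ‖P^[n] x - Q^[n] x‖ ≤ N * γ ^ N * δ := by
  refine le_mul_pow_mul_of_le_mul_add hγ hδ (by simp) fun n hn => ?_
  rw [Function.iterate_succ_apply', Function.iterate_succ_apply']
  calc ‖P (P^[n] x) - Q (Q^[n] x)‖
      ≤ ‖P (P^[n] x) - P (Q^[n] x)‖ + ‖P (Q^[n] x) - Q (Q^[n] x)‖ :=
        norm_sub_le_norm_sub_add_norm_sub _ _ _
    _ ≤ γ * ‖P^[n] x - Q^[n] x‖ + δ := add_le_add (hP _ _) (hdefect n hn)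

theorem norm_parareal_update_sub_le {Φ 𝓒 𝓕 : E → E} {γ δc δf : ℝ} {v w y : E}
    (h𝓒 : ‖𝓒 v - 𝓒 y‖ ≤ γ * ‖v - y‖)
    (hc : ‖(Φ w - 𝓒 w) - (Φ y - 𝓒 y)‖ ≤ δc * ‖w - y‖)
    (hf : ‖(Φ w - 𝓕 w) - (Φ y - 𝓕 y)‖ ≤ δf * ‖w - y‖) :
    ‖𝓒 v + 𝓕 w - 𝓒 w - Φ y‖ ≤ γ * ‖v - y‖ + (δc + δf) * ‖w - y‖ + ‖Φ y - 𝓕 y‖ := by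
  have hsplit : 𝓒 v + 𝓕 w - 𝓒 w - Φ y = (𝓒 v - 𝓒 y) + ((Φ w - 𝓒 w) - (Φ y - 𝓒 y))
      + -((Φ w - 𝓕 w) - (Φ y - 𝓕 y)) + -(Φ y - 𝓕 y) := by abel
  rw [hsplit]
  refine norm_add₄_le.trans ?_
  rw [norm_neg, norm_neg]
  linarith

theorem norm_parareal_sweep_sub_le {Φ 𝓒 𝓕 : E → E} {γ δc δf β ε : ℝ} (hγ : 1 ≤ γ)
    (hδc : 0 ≤ δc) (hδf : 0 ≤ δf) (hβ : 0 ≤ β)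
    (h𝓒 : ∀ x y, ‖𝓒 x - 𝓒 y‖ ≤ γ * ‖x - y‖)
    (hc : ∀ x y, ‖(Φ x - 𝓒 x) - (Φ y - 𝓒 y)‖ ≤ δc * ‖x - y‖)
    (hf : ∀ x y, ‖(Φ x - 𝓕 x) - (Φ y - 𝓕 y)‖ ≤ δf * ‖x - y‖)
    {x : E} {N : ℕ} (hdefect : ∀ n < N, ‖Φ (Φ^[n] x) - 𝓕 (Φ^[n] x)‖ ≤ β)
    {v w : ℕ → E} (hv₀ : v 0 = x) (hv : ∀ n, v (n + 1) = 𝓒 (v n) + 𝓕 (w n) - 𝓒 (w n))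
    (hw : ∀ n ≤ N, ‖w n - Φ^[n] x‖ ≤ ε) :
    ∀ n ≤ N, ‖v n - Φ^[n] x‖ ≤ N * γ ^ N * ((δc + δf) * ε + β) := by
  have hε : 0 ≤ ε := (norm_nonneg _).trans (hw 0 N.zero_le)
  refine le_mul_pow_mul_of_le_mul_add hγ (by positivity) (by simp [hv₀]) fun n hn => ?_
  rw [hv, Function.iterate_succ_apply']
  have hwn := mul_le_mul_of_nonneg_left (hw n hn.le) (add_nonneg hδc hδf)
  linarith [norm_parareal_update_sub_le (h𝓒 (v n) (Φ^[n] x)) (hc (w n) (Φ^[n] x))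
    (hf (w n) (Φ^[n] x)), hdefect n hn]

theorem norm_parareal_sub_le {Φ 𝓒 𝓕 : E → E} {x : E} {u : ℕ → ℕ → E} (hzero : ∀ k, u k 0 = x)
    (hrec : ∀ k n, u (k + 1) (n + 1) = 𝓒 (u (k + 1) n) + 𝓕 (u k n) - 𝓒 (u k n))
    {N : ℕ} {K M ρ Ec Ef : ℝ} (hK : 0 ≤ K) (hM : 1 ≤ M) (hρ : 0 ≤ ρ) (hEc : 0 ≤ Ec)
    (hEf : 0 ≤ Ef) (hfine : ∀ n ≤ N, ‖𝓕^[n] x - Φ^[n] x‖ ≤ ρ * Ef)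
    (hiter : ∀ k, ∀ n ≤ N, ‖u k n - Φ^[n] x‖ ≤ K * M ^ k * (Ec ^ k + Ef)) {k n : ℕ}
    (hn : n ≤ N) : ‖u k n - Φ^[n] x‖ ≤ (K * M ^ N + ρ) * (Ec ^ k + Ef) := by
  rcases le_or_gt n k with hnk | hkn
  · rw [parareal_eq_iterate_of_le hzero hrec n k hnk]
    calc _ ≤ ρ * Ef := hfine n hn
      _ ≤ ρ * (Ec ^ k + Ef) := by gcongr; exact le_add_of_nonneg_left (by positivity)
      _ ≤ _ := by gcongr; exact le_add_of_nonneg_left (by positivity)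
  · calc _ ≤ K * M ^ k * (Ec ^ k + Ef) := hiter k n hn
      _ ≤ K * M ^ N * (Ec ^ k + Ef) := by gcongr; omega
      _ ≤ _ := by gcongr; exact le_add_of_nonneg_right hρ

end Parareal

theorem parareal_convergence_to_exact_general
    (d : ℕ)
    (C H : ℝ) (hC : 0 < C) (hH : 0 < H)
    (N : ℕ)
    (Ef Ec : ℝ) (hEf : 0 ≤ Ef) (hEfc : Ef ≤ Ec)
    (u₀ : EuclideanSpace ℝ (Fin d))
    (Φ 𝓒 𝓕 : EuclideanSpace ℝ (Fin d) → EuclideanSpace ℝ (Fin d))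
    (h𝓒stab : ∀ x y, ‖𝓒 x - 𝓒 y‖ ≤ (1 + C * H) * ‖x - y‖)
    (hΦstab : ∀ x y, ‖Φ x - Φ y‖ ≤ (1 + C * H) * ‖x - y‖)
    (hδ𝓒 : ∀ x y, ‖(Φ x - 𝓒 x) - (Φ y - 𝓒 y)‖ ≤ C * H * Ec * ‖x - y‖)
    (hδ𝓕 : ∀ x y, ‖(Φ x - 𝓕 x) - (Φ y - 𝓕 y)‖ ≤ C * H * Ef * ‖x - y‖)
    (h𝓒acc : ∀ x, ‖Φ x - 𝓒 x‖ ≤ C * H * Ec * (1 + ‖x‖))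
    (h𝓕acc : ∀ x, ‖Φ x - 𝓕 x‖ ≤ C * H * Ef * (1 + ‖x‖))
    (B : ℝ)
    (hB : B = (Finset.range (N + 1)).sup' Finset.nonempty_range_add_one
        (fun n => 1 + ‖𝓕^[n] u₀‖)
      + (Finset.range (N + 1)).sup' Finset.nonempty_range_add_one
        (fun n => 1 + ‖Φ^[n] u₀‖))
    (u : ℕ → ℕ → EuclideanSpace ℝ (Fin d))
    (hinit : ∀ n : ℕ, u 0 n = 𝓒^[n] u₀)
    (hzero : ∀ k : ℕ, u k 0 = u₀)
    (hrec : ∀ k n : ℕ, u (k + 1) (n + 1)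
      = 𝓒 (u (k + 1) n) + 𝓕 (u k n) - 𝓒 (u k n)) :
    ∃ Λ' : ℝ, 0 < Λ' ∧ ∀ k : ℕ, 1 ≤ k → ∀ n : ℕ, n ≤ N →
      ‖u k n - Φ^[n] u₀‖ ≤ Λ' * (Ec ^ k + Ef) := by
  have hCH : 0 ≤ C * H := (mul_pos hC hH).le
  have hEc : 0 ≤ Ec := hEf.trans hEfc
  have hγ : 1 ≤ 1 + C * H := le_add_of_nonneg_right hCH
  have hBn : ∀ n ≤ N, 1 + ‖𝓕^[n] u₀‖ ≤ B ∧ 1 + ‖Φ^[n] u₀‖ ≤ B := fun n hn =>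
    le_sup'_range_add_sup'_range hB (fun _ => by positivity) (fun _ => by positivity) hn
  have hB₀ : 0 ≤ B := by linarith [(hBn 0 N.zero_le).2, norm_nonneg (Φ^[0] u₀)]
  set ℓ := N * (1 + C * H) ^ N * (C * H)
  have hℓ : 0 ≤ ℓ := by positivity
  have hfine : ∀ n ≤ N, ‖𝓕^[n] u₀ - Φ^[n] u₀‖ ≤ ℓ * B * Ef := fun n hn => by
    rw [norm_sub_rev]
    refine (norm_iterate_sub_iterate_le hγ (by positivity : 0 ≤ C * H * Ef * B) hΦstab
      (fun m hm => (h𝓕acc _).trans ?_) n hn).trans_eq (by ring)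
    gcongr; exact (hBn m hm.le).1
  have hcoarse : ∀ n ≤ N, ‖u 0 n - Φ^[n] u₀‖ ≤ ℓ * B * Ec := fun n hn => by
    rw [hinit]
    refine (norm_iterate_sub_iterate_le hγ (by positivity : 0 ≤ C * H * Ec * B) h𝓒stab
      (fun m hm => (norm_sub_rev _ _).trans_le ((h𝓒acc _).trans ?_)) n hn).trans_eq (by ring)
    gcongr; exact (hBn m hm.le).2
  have hsweep : ∀ k ε, (∀ n ≤ N, ‖u k n - Φ^[n] u₀‖ ≤ ε) →
      ∀ n ≤ N, ‖u (k + 1) n - Φ^[n] u₀‖ ≤ ℓ * ((Ec + Ef) * ε + B * Ef) := fun k ε hε n hn =>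
    (norm_parareal_sweep_sub_le hγ (by positivity) (by positivity)
      (by positivity : 0 ≤ C * H * Ef * B) h𝓒stab hδ𝓒 hδ𝓕
      (fun m hm => (h𝓕acc _).trans (by gcongr; exact (hBn m hm.le).2)) (hzero _) (hrec k) hε
      n hn).trans_eq (by ring)
  exact ⟨_, by positivity, fun k _ n hn => norm_parareal_sub_le hzero hrec (by positivity)
    (le_add_of_nonneg_right (by positivity)) (by positivity) hEc hEf hfine
    (parareal_error_bound hℓ hB₀ hEf hEfc hcoarse hsweep) hn⟩

/-- Convergence of the parareal iteration to the exact trajectory: under the standard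
stability and accuracy hypotheses on the exact flow `Φ`, the coarse propagator `𝓒`
(accuracy level `E_c`) and the fine propagator `𝓕` (accuracy level `E_f ≤ E_c`),
there is a constant `Λ'` (depending only on `C`, `T`, `B`) such that the `k`-th
parareal iterate satisfies
`max_{0 ≤ n ≤ N} ‖uᵏₙ - Φⁿ u₀‖ ≤ Λ' * (E_c ^ k + E_f)`. -/
theorem parareal_convergence_to_exact
    (d : ℕ) (hd : 1 ≤ d)
    (C H : ℝ) (hC : 0 < C) (hH : 0 < H)
    (N : ℕ) (T : ℝ) (hT : T = (N : ℝ) * H)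
    (Ef Ec : ℝ) (hEf : 0 ≤ Ef) (hEfc : Ef ≤ Ec)
    (u₀ : EuclideanSpace ℝ (Fin d))
    (Φ 𝓒 𝓕 : EuclideanSpace ℝ (Fin d) → EuclideanSpace ℝ (Fin d))
    (h𝓒stab : ∀ x y, ‖𝓒 x - 𝓒 y‖ ≤ (1 + C * H) * ‖x - y‖)
    (hΦstab : ∀ x y, ‖Φ x - Φ y‖ ≤ (1 + C * H) * ‖x - y‖)
    (hδ𝓒 : ∀ x y, ‖(Φ x - 𝓒 x) - (Φ y - 𝓒 y)‖ ≤ C * H * Ec * ‖x - y‖)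
    (hδ𝓕 : ∀ x y, ‖(Φ x - 𝓕 x) - (Φ y - 𝓕 y)‖ ≤ C * H * Ef * ‖x - y‖)
    (h𝓒acc : ∀ x, ‖Φ x - 𝓒 x‖ ≤ C * H * Ec * (1 + ‖x‖))
    (h𝓕acc : ∀ x, ‖Φ x - 𝓕 x‖ ≤ C * H * Ef * (1 + ‖x‖))
    (B : ℝ)
    (hB : B = (Finset.range (N + 1)).sup' Finset.nonempty_range_add_one
        (fun n => 1 + ‖𝓕^[n] u₀‖)
      + (Finset.range (N + 1)).sup' Finset.nonempty_range_add_one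
        (fun n => 1 + ‖Φ^[n] u₀‖))
    (u : ℕ → ℕ → EuclideanSpace ℝ (Fin d))
    (hinit : ∀ n : ℕ, u 0 n = 𝓒^[n] u₀)
    (hzero : ∀ k : ℕ, u k 0 = u₀)
    (hrec : ∀ k n : ℕ, u (k + 1) (n + 1)
      = 𝓒 (u (k + 1) n) + 𝓕 (u k n) - 𝓒 (u k n)) :
    ∃ Λ' : ℝ, 0 < Λ' ∧ ∀ k : ℕ, 1 ≤ k → ∀ n : ℕ, n ≤ N →
      ‖u k n - Φ^[n] u₀‖ ≤ Λ' * (Ec ^ k + Ef) :=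
  parareal_convergence_to_exact_general d C H hC hH N Ef Ec hEf hEfc u₀ Φ 𝓒 𝓕 h𝓒stab hΦstab hδ𝓒 hδ𝓕
    h𝓒acc h𝓕acc B hB u hinit hzero hrec
end

section
/- Let ε > 0, H > 0, α_c = 1, θ ∈ ℝ, and define maps on ℂ by 𝓕u = e^{(1+i/ε)H}·u (the exact fine propagator of the spiral equation) and 𝓒u = e^{H}·e^{i(H/ε+θ)}·u (a coarse propagator that is exact in the slow variable |u| but makes a phase error θ per step). Define the parareal iterates with u₀ = 1 by u⁰ₙ = 𝓒ⁿ(1), uᵏ₀ = 1, and uᵏₙ = 𝓒(uᵏₙ₋₁) + 𝓕(uᵏ⁻¹ₙ₋₁) − 𝓒(uᵏ⁻¹ₙ₋₁). Then the first-iteration value at n = 3 satisfies the exact identity u¹₃ = e^{3(1+i/ε)H}·(1 − (1 − e^{iθ})²·(1 + 2e^{iθ})), and consequently |u¹₃ − u(3H)| ≤ 3·θ²·e^{3H}, where u(3H) = e^{3(1+i/ε)H} is the exact solution of u̇ = (1 + i/ε)u, u(0) = 1, at time 3H. -/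
open Complex

/-!
For scalar propagators `𝓒 z = c z` and `𝓕 z = f z` the first parareal iterate is a discrete
variation of constants, `u¹ₙ₊₁ = cⁿ⁺¹ + (n + 1)(f - c)cⁿ`. For the spiral `c = f g` with
`g = e^{iθ}`, so `u¹₃ = f³(3g² - 2g³) = f³(1 - (1 - g)²(1 + 2g))`, and the error
`f³(1 - g)²(1 + 2g)` is bounded using `|f|³ = e^{3H}`, `|1 - g| ≤ |θ|` and `|1 + 2g| ≤ 3`.
-/

theorem parareal_first_iterate_of_mul {R : Type*} [CommRing R] (f c : R) (u : ℕ → ℕ → R)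
    (hinit : ∀ n, u 0 n = c ^ n) (hzero : u 1 0 = 1)
    (hrec : ∀ n, u 1 (n + 1) = c * u 1 n + f * u 0 n - c * u 0 n) (n : ℕ) :
    u 1 (n + 1) = c ^ (n + 1) + (n + 1) * (f - c) * c ^ n := by
  induction n with
  | zero => rw [hrec, hzero, hinit]; ring
  | succ n ih => rw [hrec, ih, hinit]; push_cast; ring

theorem spiral_coarse_eq_fine_mul_phase (ε H θ : ℝ) :
    (Real.exp H : ℂ) * exp (I * ((H : ℂ) / ε + θ)) = exp ((1 + I / ε) * H) * exp (I * θ) := by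
  rw [ofReal_exp, ← exp_add, ← exp_add]
  ring_nf

theorem Complex.norm_exp_one_add_I_div_mul (ε H : ℝ) : ‖exp ((1 + I / ε) * H)‖ = Real.exp H := by
  rw [norm_exp]
  simp

theorem Complex.norm_one_add_two_mul_exp_I_mul_ofReal_le (θ : ℝ) :
    ‖1 + 2 * exp (I * θ)‖ ≤ 3 :=
  calc ‖1 + 2 * exp (I * θ)‖ ≤ ‖(1 : ℂ)‖ + ‖2 * exp (I * θ)‖ := norm_add_le _ _
    _ = 3 := by rw [norm_mul, mul_comm I, norm_exp_ofReal_mul_I]; norm_num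

theorem parareal_spiral_first_iteration_general
    (ε H θ : ℝ)
    (𝓕 𝓒 : ℂ → ℂ)
    (h𝓕 : ∀ z : ℂ, 𝓕 z = Complex.exp ((1 + Complex.I / (ε : ℂ)) * (H : ℂ)) * z)
    (h𝓒 : ∀ z : ℂ, 𝓒 z = (Real.exp H : ℂ)
      * Complex.exp (Complex.I * ((H : ℂ) / (ε : ℂ) + (θ : ℂ))) * z)
    (u : ℕ → ℕ → ℂ)
    (hinit : ∀ n : ℕ, u 0 n = 𝓒^[n] 1)
    (hzero : ∀ k : ℕ, u k 0 = 1)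
    (hrec : ∀ k n : ℕ, u (k + 1) (n + 1)
      = 𝓒 (u (k + 1) n) + 𝓕 (u k n) - 𝓒 (u k n)) :
    u 1 3 = Complex.exp (3 * (1 + Complex.I / (ε : ℂ)) * (H : ℂ))
        * (1 - (1 - Complex.exp (Complex.I * (θ : ℂ))) ^ 2
            * (1 + 2 * Complex.exp (Complex.I * (θ : ℂ))))
      ∧ ‖u 1 3 - Complex.exp (3 * (1 + Complex.I / (ε : ℂ)) * (H : ℂ))‖
        ≤ 3 * θ ^ 2 * Real.exp (3 * H) := by
  set f := exp ((1 + I / ε) * H)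
  set g := exp (I * θ)
  obtain rfl : 𝓕 = (f * ·) := funext h𝓕
  obtain rfl : 𝓒 = (f * g * ·) := funext fun z => by rw [h𝓒, spiral_coarse_eq_fine_mul_phase]
  have hf3 : exp (3 * (1 + I / ε) * H) = f ^ 3 := by rw [← exp_nat_mul]; ring_nf
  have hu13 : u 1 3 = f ^ 3 * (1 - (1 - g) ^ 2 * (1 + 2 * g)) := by
    rw [parareal_first_iterate_of_mul f (f * g) u (fun n => by simp [hinit, mul_left_iterate])
      (hzero 1) (fun n => hrec 0 n) 2]
    ring
  refine ⟨by rw [hu13, hf3], ?_⟩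
  have hg : ‖1 - g‖ ≤ |θ| := by rw [norm_sub_rev]; exact Real.norm_exp_I_mul_ofReal_sub_one_le
  calc ‖u 1 3 - exp (3 * (1 + I / ε) * H)‖ = ‖f‖ ^ 3 * (‖1 - g‖ ^ 2 * ‖1 + 2 * g‖) := by
        rw [hu13, hf3, ← norm_neg, ← norm_pow, ← norm_pow, ← norm_mul, ← norm_mul]
        ring_nf
    _ ≤ Real.exp H ^ 3 * (|θ| ^ 2 * 3) := by
        rw [norm_exp_one_add_I_div_mul]
        gcongr
        exact norm_one_add_two_mul_exp_I_mul_ofReal_le θ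
    _ = 3 * θ ^ 2 * Real.exp (3 * H) := by rw [sq_abs, ← Real.exp_nat_mul]; push_cast; ring

/-- For the expanding spiral `u̇ = (1 + i/ε) u`, `u(0) = 1`, with exact fine propagator
`𝓕 u = e^{(1+i/ε)H} u` and a coarse propagator `𝓒 u = e^H e^{i(H/ε+θ)} u` that is exact
in the amplitude but makes a phase error `θ` per step, the first parareal iterate at
`n = 3` satisfies `u¹₃ = e^{3(1+i/ε)H} (1 - (1 - e^{iθ})² (1 + 2 e^{iθ}))`, hence
`|u¹₃ - u(3H)| ≤ 3 θ² e^{3H}`. -/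
theorem parareal_spiral_first_iteration
    (ε H θ : ℝ) (hε : 0 < ε) (hH : 0 < H)
    (𝓕 𝓒 : ℂ → ℂ)
    (h𝓕 : ∀ z : ℂ, 𝓕 z = Complex.exp ((1 + Complex.I / (ε : ℂ)) * (H : ℂ)) * z)
    (h𝓒 : ∀ z : ℂ, 𝓒 z = (Real.exp H : ℂ)
      * Complex.exp (Complex.I * ((H : ℂ) / (ε : ℂ) + (θ : ℂ))) * z)
    (u : ℕ → ℕ → ℂ)
    (hinit : ∀ n : ℕ, u 0 n = 𝓒^[n] 1)
    (hzero : ∀ k : ℕ, u k 0 = 1)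
    (hrec : ∀ k n : ℕ, u (k + 1) (n + 1)
      = 𝓒 (u (k + 1) n) + 𝓕 (u k n) - 𝓒 (u k n)) :
    u 1 3 = Complex.exp (3 * (1 + Complex.I / (ε : ℂ)) * (H : ℂ))
        * (1 - (1 - Complex.exp (Complex.I * (θ : ℂ))) ^ 2
            * (1 + 2 * Complex.exp (Complex.I * (θ : ℂ))))
      ∧ ‖u 1 3 - Complex.exp (3 * (1 + Complex.I / (ε : ℂ)) * (H : ℂ))‖
        ≤ 3 * θ ^ 2 * Real.exp (3 * H) :=
  parareal_spiral_first_iteration_general ε H θ 𝓕 𝓒 h𝓕 h𝓒 u hinit hzero hrec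
end

section
/- Let ε > 0 and take the resonant parameters a = 2, b = 1, and let (x₁, v₁, x₂, v₂) : I → ℝ⁴ be any differentiable solution of the stellar-orbit system ẋ₁ = 2 ε⁻¹ v₁, v̇₁ = −2 ε⁻¹ x₁ + x₂²/2, ẋ₂ = ε⁻¹ v₂, v̇₂ = −ε⁻¹ x₂ + 2 x₁ x₂ on an open interval I. Then the resonance variable ξ₃ := x₁ x₂² + 2 v₁ x₂ v₂ − x₁ v₂² is differentiable with d/dt ξ₃(t) = x₂(t)³ v₂(t) + 4 x₁(t) x₂(t)² v₁(t) − 4 x₁(t)² x₂(t) v₂(t) for all t ∈ I; in particular, all ε⁻¹ terms cancel exactly, so ξ₃ is a slow variable whose derivative is bounded independently of ε on bounded solutions. -/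
/-!
With `z₁ = x₁ + i v₁` and `z₂ = x₂ + i v₂` the resonance variable is `ξ₃ = Re (z₁ z̄₂²)`. The fast
part of the system is the rotation `ż₁ = -2 i ε⁻¹ z₁`, `ż₂ = -i ε⁻¹ z₂`, under which `z₁ z̄₂²` is
invariant because the frequency of `z₁` is exactly twice that of `z₂`; hence only the `O(1)`
coupling terms survive in `ξ̇₃`.
-/

theorem HasDerivAt.resonance_variable {x₁ v₁ x₂ v₂ : ℝ → ℝ} {x₁' v₁' x₂' v₂' t : ℝ}
    (hx₁ : HasDerivAt x₁ x₁' t) (hv₁ : HasDerivAt v₁ v₁' t)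
    (hx₂ : HasDerivAt x₂ x₂' t) (hv₂ : HasDerivAt v₂ v₂' t) :
    HasDerivAt (fun t => x₁ t * x₂ t ^ 2 + 2 * v₁ t * x₂ t * v₂ t - x₁ t * v₂ t ^ 2)
      (x₁' * (x₂ t ^ 2 - v₂ t ^ 2) + 2 * v₁' * x₂ t * v₂ t
        + 2 * x₂' * (x₁ t * x₂ t + v₁ t * v₂ t) + 2 * v₂' * (v₁ t * x₂ t - x₁ t * v₂ t)) t := by
  refine (((hx₁.mul (hx₂.pow 2)).add (((hv₁.const_mul 2).mul hx₂).mul hv₂)).sub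
    (hx₁.mul (hv₂.pow 2))).congr_deriv ?_
  simp only [Pi.mul_apply, Pi.pow_apply, Nat.cast_ofNat, Nat.add_one_sub_one]
  ring

theorem stellar_orbit_resonance_slow_variable_general
    (ε : ℝ)
    (s : Set ℝ)
    (x₁ v₁ x₂ v₂ : ℝ → ℝ)
    (hx₁ : ∀ t ∈ s, HasDerivAt x₁ (2 * ε⁻¹ * v₁ t) t)
    (hv₁ : ∀ t ∈ s, HasDerivAt v₁ (-(2 * ε⁻¹ * x₁ t) + x₂ t ^ 2 / 2) t)
    (hx₂ : ∀ t ∈ s, HasDerivAt x₂ (ε⁻¹ * v₂ t) t)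
    (hv₂ : ∀ t ∈ s, HasDerivAt v₂ (-(ε⁻¹ * x₂ t) + 2 * x₁ t * x₂ t) t) :
    ∀ t ∈ s, HasDerivAt
      (fun t => x₁ t * x₂ t ^ 2 + 2 * v₁ t * x₂ t * v₂ t - x₁ t * v₂ t ^ 2)
      (x₂ t ^ 3 * v₂ t + 4 * x₁ t * x₂ t ^ 2 * v₁ t - 4 * x₁ t ^ 2 * x₂ t * v₂ t)
      t := by
  intro t ht
  refine ((hx₁ t ht).resonance_variable (hv₁ t ht) (hx₂ t ht) (hv₂ t ht)).congr_deriv ?_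
  ring

/-- For any solution of the stellar-orbit system at resonance (`a = 2`, `b = 1`),
the resonance variable `ξ₃ = x₁ x₂² + 2 v₁ x₂ v₂ - x₁ v₂²` has derivative
`x₂³ v₂ + 4 x₁ x₂² v₁ - 4 x₁² x₂ v₂`: all `ε⁻¹` terms cancel exactly, so `ξ₃` is a
slow variable. -/
theorem stellar_orbit_resonance_slow_variable
    (ε : ℝ) (hε : 0 < ε)
    (s : Set ℝ) (hs : IsOpen s)
    (x₁ v₁ x₂ v₂ : ℝ → ℝ)
    (hx₁ : ∀ t ∈ s, HasDerivAt x₁ (2 * ε⁻¹ * v₁ t) t)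
    (hv₁ : ∀ t ∈ s, HasDerivAt v₁ (-(2 * ε⁻¹ * x₁ t) + x₂ t ^ 2 / 2) t)
    (hx₂ : ∀ t ∈ s, HasDerivAt x₂ (ε⁻¹ * v₂ t) t)
    (hv₂ : ∀ t ∈ s, HasDerivAt v₂ (-(ε⁻¹ * x₂ t) + 2 * x₁ t * x₂ t) t) :
    ∀ t ∈ s, HasDerivAt
      (fun t => x₁ t * x₂ t ^ 2 + 2 * v₁ t * x₂ t * v₂ t - x₁ t * v₂ t ^ 2)
      (x₂ t ^ 3 * v₂ t + 4 * x₁ t * x₂ t ^ 2 * v₁ t - 4 * x₁ t ^ 2 * x₂ t * v₂ t)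
      t :=
  stellar_orbit_resonance_slow_variable_general ε s x₁ v₁ x₂ v₂ hx₁ hv₁ hx₂ hv₂
end

section
/- Let m ≥ 1, let K ⊆ ℝᵐ be a convex compact set, let F : ℝᵐ → ℝᵐ be continuously differentiable and g₁ : ℝᵐ → ℝ be twice continuously differentiable, with ‖F‖, ‖DF‖, ‖Dg₁‖, ‖D²g₁‖ bounded by a constant L on K. Let η > 0, ξ₀ ∈ ℝᵐ, and let ξᶠ, ξᴮ : [0, η] → ℝᵐ be differentiable curves taking values in K with ξᶠ(0) = ξᴮ(0) = ξ₀, (ξᶠ)′(t) = F(ξᶠ(t)) and (ξᴮ)′(t) = −F(ξᴮ(t)) for all t ∈ [0, η]. Then there exists a constant C depending only on L (and m) such that | ∫₀^η g₁(ξᶠ(t)) dt − η·g₁(ξᶠ(η)) + ∫₀^η g₁(ξᴮ(t)) dt − η·g₁(ξᴮ(η)) | ≤ C·η³. (Each bracketed term alone is only O(η²); the symmetric forward–backward combination cancels the second-order terms.) -/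
/-!
Integrating by parts, `∫₀^η h - η h(η) = -∫₀^η t h'(t) dt`. Along the forward and backward flows
`d/dt g₁(ξ(t)) = ±ψ(ξ(t))` with `ψ = Dg₁ · F`, so the symmetric combination equals
`-∫₀^η t (ψ(ξᶠ(t)) - ψ(ξᴮ(t))) dt`: the `O(η²)` parts cancel. On the convex set `K`, `ψ` is
`2L²`-Lipschitz and the two curves, starting together, separate at speed at most `2L`, so the
integrand is at most `4L³t²` and the combination is at most `4L³η³`.
-/

open Set intervalIntegral MeasureTheory

theorem integral_sub_mul_eq_neg_integral_mul_deriv {h φ : ℝ → ℝ} {η : ℝ} (hη : 0 ≤ η)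
    (hh : ∀ t ∈ Icc 0 η, HasDerivAt h (φ t) t) (hφ : ContinuousOn φ (Icc 0 η)) :
    (∫ t in 0..η, h t) - η * h η = -∫ t in 0..η, t * φ t := by
  rw [← uIcc_of_le hη] at hh hφ
  have hh_int : IntervalIntegrable h volume 0 η :=
    ContinuousOn.intervalIntegrable fun t ht => (hh t ht).continuousAt.continuousWithinAt
  have htφ_int : IntervalIntegrable (fun t => t * φ t) volume 0 η :=
    (continuousOn_id.mul hφ).intervalIntegrable
  have hprod : ∀ t ∈ uIcc 0 η, HasDerivAt (fun s => s * h s) (h t + t * φ t) t := fun t ht =>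
    one_mul (h t) ▸ (hasDerivAt_id' t).mul (hh t ht)
  have := integral_eq_sub_of_hasDerivAt hprod (hh_int.add htφ_int)
  rw [integral_add hh_int htφ_int] at this
  simp only [zero_mul, sub_zero] at this
  linarith

theorem add_integral_sub_mul_eq_neg_integral_mul_add {h₁ h₂ φ₁ φ₂ : ℝ → ℝ} {η : ℝ}
    (hη : 0 ≤ η) (hh₁ : ∀ t ∈ Icc 0 η, HasDerivAt h₁ (φ₁ t) t)
    (hh₂ : ∀ t ∈ Icc 0 η, HasDerivAt h₂ (φ₂ t) t)
    (hφ₁ : ContinuousOn φ₁ (Icc 0 η)) (hφ₂ : ContinuousOn φ₂ (Icc 0 η)) :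
    (∫ t in 0..η, h₁ t) - η * h₁ η + (∫ t in 0..η, h₂ t) - η * h₂ η
      = -∫ t in 0..η, t * (φ₁ t + φ₂ t) := by
  have hint : ∀ {h φ : ℝ → ℝ}, (∀ t ∈ Icc 0 η, HasDerivAt h (φ t) t) →
      IntervalIntegrable h volume 0 η := fun hh =>
    ContinuousOn.intervalIntegrable fun t ht =>
      (hh t (uIcc_of_le hη ▸ ht)).continuousAt.continuousWithinAt
  have := integral_sub_mul_eq_neg_integral_mul_deriv (h := fun t => h₁ t + h₂ t) hη
    (fun t ht => (hh₁ t ht).add (hh₂ t ht)) (hφ₁.add hφ₂)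
  rw [integral_add (hint hh₁) (hint hh₂)] at this
  linarith

theorem abs_integral_mul_le_of_abs_le_mul {u : ℝ → ℝ} {c η : ℝ} (hη : 0 ≤ η)
    (hu : ∀ t ∈ Icc 0 η, |u t| ≤ c * t) :
    |∫ t in 0..η, t * u t| ≤ c * η ^ 3 := by
  have hbound : ∀ t ∈ uIoc 0 η, ‖t * u t‖ ≤ c * η ^ 2 := by
    intro t ht
    rw [uIoc_of_le hη] at ht
    have hut := hu t (Ioc_subset_Icc_self ht)
    have hc : 0 ≤ c := nonneg_of_mul_nonneg_left ((abs_nonneg _).trans hut) ht.1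
    rw [Real.norm_eq_abs, abs_mul, abs_of_pos ht.1]
    calc t * |u t| ≤ t * (c * t) := by gcongr; exact ht.1.le
      _ = c * t ^ 2 := by ring
      _ ≤ c * η ^ 2 := by gcongr; exact ht.1.le; exact ht.2
  have := norm_integral_le_of_norm_le_const hbound
  rw [sub_zero, abs_of_nonneg hη] at this
  simpa [pow_succ, mul_assoc] using this

theorem ContinuousLinearMap.norm_apply_sub_apply_le {𝕜 E F : Type*} [NontriviallyNormedField 𝕜]
    [NormedAddCommGroup E] [NormedSpace 𝕜 E] [NormedAddCommGroup F] [NormedSpace 𝕜 F]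
    (A B : E →L[𝕜] F) (v w : E) : ‖A v - B w‖ ≤ ‖A - B‖ * ‖v‖ + ‖B‖ * ‖v - w‖ :=
  calc ‖A v - B w‖ = ‖(A - B) v + B (v - w)‖ := by simp
    _ ≤ ‖A - B‖ * ‖v‖ + ‖B‖ * ‖v - w‖ :=
      norm_add_le_of_le ((A - B).le_opNorm v) (B.le_opNorm _)

section

variable {E G : Type*} [NormedAddCommGroup E] [NormedSpace ℝ E]
  [NormedAddCommGroup G] [NormedSpace ℝ G] {K : Set E} {L : ℝ}

theorem Convex.norm_fderiv_sub_le_of_norm_iteratedFDeriv_two_le (hK : Convex ℝ K) {g : E → G}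
    (hg : ContDiff ℝ 2 g) (hD2g : ∀ x ∈ K, ‖iteratedFDeriv ℝ 2 g x‖ ≤ L) {x y : E}
    (hx : x ∈ K) (hy : y ∈ K) : ‖fderiv ℝ g x - fderiv ℝ g y‖ ≤ L * ‖x - y‖ :=
  hK.norm_image_sub_le_of_norm_fderiv_le
    (fun z _ => (hg.fderiv_right (m := 1) le_rfl).differentiable one_ne_zero z)
    (fun z hz => by simpa [← norm_iteratedFDeriv_one, norm_iteratedFDeriv_fderiv] using hD2g z hz)
    hy hx

theorem Convex.abs_fderiv_apply_sub_le (hK : Convex ℝ K) {F : E → E} {g : E → ℝ}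
    (hF : ContDiff ℝ 1 F) (hg : ContDiff ℝ 2 g)
    (hFb : ∀ x ∈ K, ‖F x‖ ≤ L) (hDF : ∀ x ∈ K, ‖fderiv ℝ F x‖ ≤ L)
    (hDg : ∀ x ∈ K, ‖fderiv ℝ g x‖ ≤ L) (hD2g : ∀ x ∈ K, ‖iteratedFDeriv ℝ 2 g x‖ ≤ L)
    {x y : E} (hx : x ∈ K) (hy : y ∈ K) :
    |fderiv ℝ g x (F x) - fderiv ℝ g y (F y)| ≤ 2 * L ^ 2 * ‖x - y‖ := by
  rw [← Real.norm_eq_abs]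
  have hL : 0 ≤ L := (norm_nonneg _).trans (hFb x hx)
  have hFlip : ‖F x - F y‖ ≤ L * ‖x - y‖ :=
    hK.norm_image_sub_le_of_norm_fderiv_le (fun z _ => hF.differentiable one_ne_zero z) hDF hy hx
  calc ‖fderiv ℝ g x (F x) - fderiv ℝ g y (F y)‖
      ≤ ‖fderiv ℝ g x - fderiv ℝ g y‖ * ‖F x‖ + ‖fderiv ℝ g y‖ * ‖F x - F y‖ :=
        ContinuousLinearMap.norm_apply_sub_apply_le _ _ _ _
    _ ≤ (L * ‖x - y‖) * L + L * (L * ‖x - y‖) := by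
        gcongr
        exacts [hK.norm_fderiv_sub_le_of_norm_iteratedFDeriv_two_le hg hD2g hx hy, hFb x hx,
          hDg y hy]
    _ = 2 * L ^ 2 * ‖x - y‖ := by ring

theorem Convex.abs_forward_backward_endpoint_error_le (hK : Convex ℝ K) {F : E → E} {g : E → ℝ}
    (hF : ContDiff ℝ 1 F) (hg : ContDiff ℝ 2 g)
    (hFb : ∀ x ∈ K, ‖F x‖ ≤ L) (hDF : ∀ x ∈ K, ‖fderiv ℝ F x‖ ≤ L)
    (hDg : ∀ x ∈ K, ‖fderiv ℝ g x‖ ≤ L) (hD2g : ∀ x ∈ K, ‖iteratedFDeriv ℝ 2 g x‖ ≤ L)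
    {η : ℝ} (hη : 0 ≤ η) {ξf ξb : ℝ → E}
    (hξfK : ∀ t ∈ Icc 0 η, ξf t ∈ K) (hξbK : ∀ t ∈ Icc 0 η, ξb t ∈ K) (h0 : ξf 0 = ξb 0)
    (hξf : ∀ t ∈ Icc 0 η, HasDerivAt ξf (F (ξf t)) t)
    (hξb : ∀ t ∈ Icc 0 η, HasDerivAt ξb (-F (ξb t)) t) :
    |(∫ t in 0..η, g (ξf t)) - η * g (ξf η) + (∫ t in 0..η, g (ξb t)) - η * g (ξb η)|
      ≤ 4 * L ^ 3 * η ^ 3 := by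
  have hDg_cont := hg.continuous_fderiv two_ne_zero
  have hcurve : ∀ {ξ : ℝ → E} {v : ℝ → E}, (∀ t ∈ Icc 0 η, HasDerivAt ξ (v t) t) →
      ∀ t ∈ Icc 0 η, HasDerivAt (fun s => g (ξ s)) (fderiv ℝ g (ξ t) (v t)) t :=
    fun hξ t ht => (hg.differentiable two_ne_zero _).hasFDerivAt.comp_hasDerivAt t (hξ t ht)
  have hψf : ContinuousOn (fun t => fderiv ℝ g (ξf t) (F (ξf t))) (Icc 0 η) :=
    (hDg_cont.clm_apply hF.continuous).comp_continuousOn fun t ht =>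
      (hξf t ht).continuousAt.continuousWithinAt
  have hψb : ContinuousOn (fun t => fderiv ℝ g (ξb t) (-F (ξb t))) (Icc 0 η) :=
    (hDg_cont.clm_apply hF.continuous.neg).comp_continuousOn fun t ht =>
      (hξb t ht).continuousAt.continuousWithinAt
  have hsep : ∀ t ∈ Icc 0 η, ‖ξf t - ξb t‖ ≤ 2 * L * t := by
    have := norm_image_sub_le_of_norm_deriv_le_segment' (f := fun t => ξf t - ξb t) (C := 2 * L)
      (fun t ht => ((hξf t ht).sub (hξb t ht)).hasDerivWithinAt) fun t ht =>
        (norm_sub_le _ _).trans <| by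
          rw [norm_neg, two_mul]
          exact add_le_add (hFb _ (hξfK t (Ico_subset_Icc_self ht)))
            (hFb _ (hξbK t (Ico_subset_Icc_self ht)))
    simpa [h0] using this
  rw [add_integral_sub_mul_eq_neg_integral_mul_add hη (hcurve hξf) (hcurve hξb) hψf hψb,
    abs_neg]
  refine abs_integral_mul_le_of_abs_le_mul hη fun t ht => ?_
  rw [map_neg, ← sub_eq_add_neg]
  calc _ ≤ 2 * L ^ 2 * ‖ξf t - ξb t‖ :=
        hK.abs_fderiv_apply_sub_le hF hg hFb hDF hDg hD2g (hξfK t ht) (hξbK t ht)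
    _ ≤ 2 * L ^ 2 * (2 * L * t) := by gcongr; exact hsep t ht
    _ = 4 * L ^ 3 * t := by ring

end

theorem symmetric_poincare_cancellation_general
    (m : ℕ) (L : ℝ) :
    ∃ C : ℝ, 0 ≤ C ∧
      ∀ (K : Set (EuclideanSpace ℝ (Fin m))), Convex ℝ K → IsCompact K →
      ∀ (F : EuclideanSpace ℝ (Fin m) → EuclideanSpace ℝ (Fin m))
        (g₁ : EuclideanSpace ℝ (Fin m) → ℝ),
        ContDiff ℝ 1 F → ContDiff ℝ 2 g₁ →
        (∀ x ∈ K, ‖F x‖ ≤ L) →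
        (∀ x ∈ K, ‖fderiv ℝ F x‖ ≤ L) →
        (∀ x ∈ K, ‖fderiv ℝ g₁ x‖ ≤ L) →
        (∀ x ∈ K, ‖iteratedFDeriv ℝ 2 g₁ x‖ ≤ L) →
      ∀ (η : ℝ), 0 < η →
      ∀ (ξ₀ : EuclideanSpace ℝ (Fin m))
        (ξf ξb : ℝ → EuclideanSpace ℝ (Fin m)),
        (∀ t ∈ Set.Icc (0 : ℝ) η, ξf t ∈ K) →
        (∀ t ∈ Set.Icc (0 : ℝ) η, ξb t ∈ K) →
        ξf 0 = ξ₀ → ξb 0 = ξ₀ →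
        (∀ t ∈ Set.Icc (0 : ℝ) η, HasDerivAt ξf (F (ξf t)) t) →
        (∀ t ∈ Set.Icc (0 : ℝ) η, HasDerivAt ξb (-F (ξb t)) t) →
        |(∫ t in (0 : ℝ)..η, g₁ (ξf t)) - η * g₁ (ξf η)
          + (∫ t in (0 : ℝ)..η, g₁ (ξb t)) - η * g₁ (ξb η)|
          ≤ C * η ^ 3 := by
  refine ⟨4 * max L 0 ^ 3, by positivity, ?_⟩
  intro K hK _ F g₁ hF hg hFb hDF hDg hD2g η hη ξ₀ ξf ξb hξfK hξbK hξf0 hξb0 hξf hξb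
  have hL : 0 ≤ L := (norm_nonneg _).trans (hFb _ (hξfK 0 ⟨le_rfl, hη.le⟩))
  rw [max_eq_left hL]
  exact hK.abs_forward_backward_endpoint_error_le hF hg hFb hDF hDg hD2g hη.le hξfK hξbK
    (hξf0.trans hξb0.symm) hξf hξb

/-- The key symmetric cancellation in the Poincaré-map multiscale method: for the
forward and backward solutions `ξᶠ`, `ξᴮ` of `ξ̇ = ±F(ξ)` from the same initial
point, the symmetric combination
`∫₀^η g₁(ξᶠ) - η g₁(ξᶠ(η)) + ∫₀^η g₁(ξᴮ) - η g₁(ξᴮ(η))` is `O(η³)`, with a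
constant depending only on the bound `L` (and the dimension `m`). -/
theorem symmetric_poincare_cancellation
    (m : ℕ) (hm : 1 ≤ m) (L : ℝ) :
    ∃ C : ℝ, 0 ≤ C ∧
      ∀ (K : Set (EuclideanSpace ℝ (Fin m))), Convex ℝ K → IsCompact K →
      ∀ (F : EuclideanSpace ℝ (Fin m) → EuclideanSpace ℝ (Fin m))
        (g₁ : EuclideanSpace ℝ (Fin m) → ℝ),
        ContDiff ℝ 1 F → ContDiff ℝ 2 g₁ →
        (∀ x ∈ K, ‖F x‖ ≤ L) →
        (∀ x ∈ K, ‖fderiv ℝ F x‖ ≤ L) →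
        (∀ x ∈ K, ‖fderiv ℝ g₁ x‖ ≤ L) →
        (∀ x ∈ K, ‖iteratedFDeriv ℝ 2 g₁ x‖ ≤ L) →
      ∀ (η : ℝ), 0 < η →
      ∀ (ξ₀ : EuclideanSpace ℝ (Fin m))
        (ξf ξb : ℝ → EuclideanSpace ℝ (Fin m)),
        (∀ t ∈ Set.Icc (0 : ℝ) η, ξf t ∈ K) →
        (∀ t ∈ Set.Icc (0 : ℝ) η, ξb t ∈ K) →
        ξf 0 = ξ₀ → ξb 0 = ξ₀ →
        (∀ t ∈ Set.Icc (0 : ℝ) η, HasDerivAt ξf (F (ξf t)) t) →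
        (∀ t ∈ Set.Icc (0 : ℝ) η, HasDerivAt ξb (-F (ξb t)) t) →
        |(∫ t in (0 : ℝ)..η, g₁ (ξf t)) - η * g₁ (ξf η)
          + (∫ t in (0 : ℝ)..η, g₁ (ξb t)) - η * g₁ (ξb η)|
          ≤ C * η ^ 3 :=
  symmetric_poincare_cancellation_general m L
end

section
/- Let m ≥ 1, let G : ℝᵐ → ℝ be Lipschitz with constant L_G, let F : ℝᵐ → ℝᵐ be bounded by L_F on a set containing the trajectories, let η > 0, ξ₀ ∈ ℝᵐ, and let ξᶠ, ξᴮ : [0, η] → ℝᵐ be differentiable curves with ξᶠ(0) = ξᴮ(0) = ξ₀, (ξᶠ)′(t) = F(ξᶠ(t)) and (ξᴮ)′(t) = −F(ξᴮ(t)) for all t ∈ [0, η]. Then | ∫₀^η G(ξᶠ(t)) dt − ∫₀^η G(ξᴮ(t)) dt | ≤ L_G · L_F · η². -/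
/-- The `O(η²)` bound on the quantity `I₂` in the proof of the accuracy of the
symmetric Poincaré force estimator: for the forward and backward solutions of
`ξ̇ = ±F(ξ)` from the same initial point, with `G` Lipschitz with constant `L_G`
and `F` bounded by `L_F` along the trajectories,
`|∫₀^η G(ξᶠ) - ∫₀^η G(ξᴮ)| ≤ L_G L_F η²`. -/
theorem symmetric_poincare_I2_bound
    (m : ℕ) (hm : 1 ≤ m)
    (G : EuclideanSpace ℝ (Fin m) → ℝ)
    (F : EuclideanSpace ℝ (Fin m) → EuclideanSpace ℝ (Fin m))
    (L_G L_F : ℝ)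
    (hG : ∀ x y : EuclideanSpace ℝ (Fin m), |G x - G y| ≤ L_G * ‖x - y‖)
    (η : ℝ) (hη : 0 < η)
    (ξ₀ : EuclideanSpace ℝ (Fin m))
    (ξf ξb : ℝ → EuclideanSpace ℝ (Fin m))
    (hf0 : ξf 0 = ξ₀) (hb0 : ξb 0 = ξ₀)
    (hfderiv : ∀ t ∈ Set.Icc (0 : ℝ) η, HasDerivAt ξf (F (ξf t)) t)
    (hbderiv : ∀ t ∈ Set.Icc (0 : ℝ) η, HasDerivAt ξb (-F (ξb t)) t)
    (hFf : ∀ t ∈ Set.Icc (0 : ℝ) η, ‖F (ξf t)‖ ≤ L_F)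
    (hFb : ∀ t ∈ Set.Icc (0 : ℝ) η, ‖F (ξb t)‖ ≤ L_F) :
    |(∫ t in (0 : ℝ)..η, G (ξf t)) - ∫ t in (0 : ℝ)..η, G (ξb t)|
      ≤ L_G * L_F * η ^ 2 := by
  have h0 : (0 : ℝ) ∈ Set.Icc (0 : ℝ) η := ⟨le_rfl, hη.le⟩
  have hLF : 0 ≤ L_F := le_trans (norm_nonneg _) (hFf 0 h0)
  -- L_G ≥ 0 using a unit vector (needs m ≥ 1)
  have hLG : 0 ≤ L_G := by
    have h1 : ‖(EuclideanSpace.single (⟨0, hm⟩ : Fin m) (1 : ℝ)) - 0‖ = 1 := by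
      simp [EuclideanSpace.norm_single]
    have := (abs_nonneg _).trans (hG (EuclideanSpace.single (⟨0, hm⟩ : Fin m) (1 : ℝ)) 0)
    rw [h1, mul_one] at this
    exact this
  -- norms of trajectory displacements
  have hfb : ∀ t ∈ Set.Icc (0 : ℝ) η, ‖ξf t - ξ₀‖ ≤ L_F * (t - 0) := by
    have := norm_image_sub_le_of_norm_deriv_le_segment'
      (f := ξf) (f' := fun t => F (ξf t)) (C := L_F)
      (fun t ht => (hfderiv t ht).hasDerivWithinAt)
      (fun t ht => hFf t (Set.Ico_subset_Icc_self ht))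
    simpa [hf0] using this
  have hbb : ∀ t ∈ Set.Icc (0 : ℝ) η, ‖ξb t - ξ₀‖ ≤ L_F * (t - 0) := by
    have := norm_image_sub_le_of_norm_deriv_le_segment'
      (f := ξb) (f' := fun t => -F (ξb t)) (C := L_F)
      (fun t ht => (hbderiv t ht).hasDerivWithinAt)
      (fun t ht => by simpa using hFb t (Set.Ico_subset_Icc_self ht))
    simpa [hb0] using this
  -- pointwise bound on the difference
  have hpt : ∀ t ∈ Set.Icc (0 : ℝ) η, |G (ξf t) - G (ξb t)| ≤ 2 * L_G * L_F * t := by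
    intro t ht
    have h1 : ‖ξf t - ξb t‖ ≤ 2 * L_F * t := by
      calc ‖ξf t - ξb t‖ = ‖(ξf t - ξ₀) - (ξb t - ξ₀)‖ := by abel_nf
        _ ≤ ‖ξf t - ξ₀‖ + ‖ξb t - ξ₀‖ := norm_sub_le _ _
        _ ≤ L_F * (t - 0) + L_F * (t - 0) := add_le_add (hfb t ht) (hbb t ht)
        _ = 2 * L_F * t := by ring
    calc |G (ξf t) - G (ξb t)| ≤ L_G * ‖ξf t - ξb t‖ := hG _ _
      _ ≤ L_G * (2 * L_F * t) := mul_le_mul_of_nonneg_left h1 hLG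
      _ = 2 * L_G * L_F * t := by ring
  -- continuity / integrability
  have hcf : ContinuousOn (fun t => G (ξf t)) (Set.Icc 0 η) := by
    have hGc : Continuous G := by
      rw [Metric.continuous_iff]
      intro x ε hε
      rcases eq_or_lt_of_le hLG with h | h
      · exact ⟨1, one_pos, fun y _ => by
          have := hG y x
          rw [← h, zero_mul] at this
          simpa [Real.dist_eq] using lt_of_le_of_lt this hε⟩
      · refine ⟨ε / L_G, div_pos hε h, fun y hy => ?_⟩
        have := hG y x
        rw [Real.dist_eq]
        calc |G y - G x| ≤ L_G * ‖y - x‖ := this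
          _ < L_G * (ε / L_G) := by
              apply mul_lt_mul_of_pos_left _ h
              simpa [dist_eq_norm] using hy
          _ = ε := by field_simp
    exact hGc.comp_continuousOn fun t ht => ((hfderiv t ht).continuousAt).continuousWithinAt
  have hcb : ContinuousOn (fun t => G (ξb t)) (Set.Icc 0 η) := by
    have hGc : Continuous G := by
      rw [Metric.continuous_iff]
      intro x ε hε
      rcases eq_or_lt_of_le hLG with h | h
      · exact ⟨1, one_pos, fun y _ => by
          have := hG y x
          rw [← h, zero_mul] at this
          simpa [Real.dist_eq] using lt_of_le_of_lt this hε⟩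
      · refine ⟨ε / L_G, div_pos hε h, fun y hy => ?_⟩
        have := hG y x
        rw [Real.dist_eq]
        calc |G y - G x| ≤ L_G * ‖y - x‖ := this
          _ < L_G * (ε / L_G) := by
              apply mul_lt_mul_of_pos_left _ h
              simpa [dist_eq_norm] using hy
          _ = ε := by field_simp
    exact hGc.comp_continuousOn fun t ht => ((hbderiv t ht).continuousAt).continuousWithinAt
  have hif : IntervalIntegrable (fun t => G (ξf t)) MeasureTheory.volume 0 η :=
    (hcf.mono (by rw [Set.uIcc_of_le hη.le])).intervalIntegrable
  have hib : IntervalIntegrable (fun t => G (ξb t)) MeasureTheory.volume 0 η :=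
    (hcb.mono (by rw [Set.uIcc_of_le hη.le])).intervalIntegrable
  have hdiff : (∫ t in (0:ℝ)..η, G (ξf t)) - ∫ t in (0:ℝ)..η, G (ξb t)
      = ∫ t in (0:ℝ)..η, (G (ξf t) - G (ξb t)) :=
    (intervalIntegral.integral_sub hif hib).symm
  rw [hdiff]
  calc |∫ t in (0:ℝ)..η, (G (ξf t) - G (ξb t))|
      ≤ ∫ t in (0:ℝ)..η, |G (ξf t) - G (ξb t)| :=
        intervalIntegral.abs_integral_le_integral_abs hη.le
    _ ≤ ∫ t in (0:ℝ)..η, 2 * L_G * L_F * t := by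
        apply intervalIntegral.integral_mono_on hη.le ((hif.sub hib).abs)
        · exact (continuous_const.mul continuous_id).intervalIntegrable _ _
        · exact hpt
    _ = L_G * L_F * η ^ 2 := by
        rw [intervalIntegral.integral_const_mul, integral_id]
        ring
end
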